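/- Let (A, ·, ω) be a symmetric twisted partial H-module algebra with ω' the inverse of ω in the ideal ⟨f₁ * f₂⟩. Then for all h,k ∈ H and a ∈ A: h·(k·a) = Σ ω(h₍₁₎,k₍₁₎)(h₍₂₎k₍₂₎·a)ω'(h₍₃₎,k₍₃₎). -/

import Mathlib

open TensorProduct

noncomputable section

/-- A twisted partial action `(α, ω)` of a Hopf algebra `H` on a unital
algebra `A` (Definition 2.1 of Alves–Batista–Dokuchaev–Paques).  Sweedler sums
are expressed by quantifying over arbitrary finite representations of the
comultiplication. -/
structure TwistedPartialAction (k H A : Type) [CommRing k]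
    [Ring H] [HopfAlgebra k H] [Ring A] [Algebra k A] where
  act : H →ₗ[k] A →ₗ[k] A
  cocycle : H →ₗ[k] H →ₗ[k] A
  /-- `1_H · a = a` -/
  act_one : ∀ a : A, act 1 a = a
  /-- `h · (ab) = Σ (h₁ · a)(h₂ · b)` -/
  act_mul : ∀ (h : H) (a b : A) (ι : Type) (s : Finset ι) (h1 h2 : ι → H),
    Coalgebra.comul (R := k) h = ∑ i ∈ s, h1 i ⊗ₜ[k] h2 i →
    act h (a * b) = ∑ i ∈ s, act (h1 i) a * act (h2 i) b
  /-- `Σ (h₁ · (l₁ · a)) ω(h₂, l₂) = Σ ω(h₁, l₁)(h₂ l₂ · a)` -/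
  twisted : ∀ (h l : H) (a : A) (ι κ : Type) (s : Finset ι) (t : Finset κ)
    (h1 h2 : ι → H) (l1 l2 : κ → H),
    Coalgebra.comul (R := k) h = ∑ i ∈ s, h1 i ⊗ₜ[k] h2 i →
    Coalgebra.comul (R := k) l = ∑ j ∈ t, l1 j ⊗ₜ[k] l2 j →
    ∑ i ∈ s, ∑ j ∈ t, act (h1 i) (act (l1 j) a) * cocycle (h2 i) (l2 j) =
      ∑ i ∈ s, ∑ j ∈ t, cocycle (h1 i) (l1 j) * act (h2 i * l2 j) a
  /-- `ω(h,l) = Σ ω(h₁, l₁)(h₂ l₂ · 1)` -/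
  cocycle_absorb : ∀ (h l : H) (ι κ : Type) (s : Finset ι) (t : Finset κ)
    (h1 h2 : ι → H) (l1 l2 : κ → H),
    Coalgebra.comul (R := k) h = ∑ i ∈ s, h1 i ⊗ₜ[k] h2 i →
    Coalgebra.comul (R := k) l = ∑ j ∈ t, l1 j ⊗ₜ[k] l2 j →
    cocycle h l = ∑ i ∈ s, ∑ j ∈ t, cocycle (h1 i) (l1 j) * act (h2 i * l2 j) 1

/-- A symmetric twisted partial action (Definition 4.2): the maps
`f₁(h⊗l) = (h·1)ε(l)` and `f₂(h⊗l) = (hl·1)` are central in the convolution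
algebra `Hom(H ⊗ H, A)`, the cocycle `ω` is normalized, satisfies the cocycle
identity, and is invertible in the ideal `⟨f₁ * f₂⟩` with inverse `ω'`
(called `inv` below), and `h·(l·1) = Σ (h₁·1)(h₂l·1)`. -/
structure SymmetricTwistedPartialAction (k H A : Type) [CommRing k]
    [Ring H] [HopfAlgebra k H] [Ring A] [Algebra k A]
    extends TwistedPartialAction k H A where
  inv : H →ₗ[k] H →ₗ[k] A
  f1_central : ∀ (T : H →ₗ[k] H →ₗ[k] A) (h l : H) (ι κ : Type)
    (s : Finset ι) (t : Finset κ) (h1 h2 : ι → H) (l1 l2 : κ → H),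
    Coalgebra.comul (R := k) h = ∑ i ∈ s, h1 i ⊗ₜ[k] h2 i →
    Coalgebra.comul (R := k) l = ∑ j ∈ t, l1 j ⊗ₜ[k] l2 j →
    ∑ i ∈ s, ∑ j ∈ t,
        (Coalgebra.counit (R := k) (l1 j) • act (h1 i) 1) * T (h2 i) (l2 j) =
      ∑ i ∈ s, ∑ j ∈ t,
        T (h1 i) (l1 j) * (Coalgebra.counit (R := k) (l2 j) • act (h2 i) 1)
  f2_central : ∀ (T : H →ₗ[k] H →ₗ[k] A) (h l : H) (ι κ : Type)
    (s : Finset ι) (t : Finset κ) (h1 h2 : ι → H) (l1 l2 : κ → H),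
    Coalgebra.comul (R := k) h = ∑ i ∈ s, h1 i ⊗ₜ[k] h2 i →
    Coalgebra.comul (R := k) l = ∑ j ∈ t, l1 j ⊗ₜ[k] l2 j →
    ∑ i ∈ s, ∑ j ∈ t, act (h1 i * l1 j) 1 * T (h2 i) (l2 j) =
      ∑ i ∈ s, ∑ j ∈ t, T (h1 i) (l1 j) * act (h2 i * l2 j) 1
  norm_right : ∀ h : H, cocycle h 1 = act h 1
  norm_left : ∀ h : H, cocycle 1 h = act h 1
  /-- the cocycle identity (9):
  `Σ (h₁·ω(l₁,m₁)) ω(h₂, l₂m₂) = Σ ω(h₁,l₁) ω(h₂l₂, m)` -/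
  cocycle_id : ∀ (h l m : H) (ι κ ν : Type) (s : Finset ι) (t : Finset κ)
    (r : Finset ν) (h1 h2 : ι → H) (l1 l2 : κ → H) (m1 m2 : ν → H),
    Coalgebra.comul (R := k) h = ∑ i ∈ s, h1 i ⊗ₜ[k] h2 i →
    Coalgebra.comul (R := k) l = ∑ j ∈ t, l1 j ⊗ₜ[k] l2 j →
    Coalgebra.comul (R := k) m = ∑ p ∈ r, m1 p ⊗ₜ[k] m2 p →
    ∑ i ∈ s, ∑ j ∈ t, ∑ p ∈ r,
        act (h1 i) (cocycle (l1 j) (m1 p)) * cocycle (h2 i) (l2 j * m2 p) =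
      ∑ i ∈ s, ∑ j ∈ t, cocycle (h1 i) (l1 j) * cocycle (h2 i * l2 j) m
  /-- `ω' * f₁ = ω'` -/
  inv_absorb_f1 : ∀ (h l : H) (ι κ : Type) (s : Finset ι) (t : Finset κ)
    (h1 h2 : ι → H) (l1 l2 : κ → H),
    Coalgebra.comul (R := k) h = ∑ i ∈ s, h1 i ⊗ₜ[k] h2 i →
    Coalgebra.comul (R := k) l = ∑ j ∈ t, l1 j ⊗ₜ[k] l2 j →
    ∑ i ∈ s, ∑ j ∈ t,
        inv (h1 i) (l1 j) * (Coalgebra.counit (R := k) (l2 j) • act (h2 i) 1) =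
      inv h l
  /-- `ω' * f₂ = ω'` -/
  inv_absorb_f2 : ∀ (h l : H) (ι κ : Type) (s : Finset ι) (t : Finset κ)
    (h1 h2 : ι → H) (l1 l2 : κ → H),
    Coalgebra.comul (R := k) h = ∑ i ∈ s, h1 i ⊗ₜ[k] h2 i →
    Coalgebra.comul (R := k) l = ∑ j ∈ t, l1 j ⊗ₜ[k] l2 j →
    inv h l = ∑ i ∈ s, ∑ j ∈ t, inv (h1 i) (l1 j) * act (h2 i * l2 j) 1
  /-- `ω * ω' = f₁ * f₂` -/
  cocycle_inv : ∀ (h l : H) (ι κ : Type) (s : Finset ι) (t : Finset κ)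
    (h1 h2 : ι → H) (l1 l2 : κ → H),
    Coalgebra.comul (R := k) h = ∑ i ∈ s, h1 i ⊗ₜ[k] h2 i →
    Coalgebra.comul (R := k) l = ∑ j ∈ t, l1 j ⊗ₜ[k] l2 j →
    ∑ i ∈ s, ∑ j ∈ t, cocycle (h1 i) (l1 j) * inv (h2 i) (l2 j) =
      ∑ i ∈ s, act (h1 i) 1 * act (h2 i * l) 1
  /-- `ω' * ω = f₁ * f₂` -/
  inv_cocycle : ∀ (h l : H) (ι κ : Type) (s : Finset ι) (t : Finset κ)
    (h1 h2 : ι → H) (l1 l2 : κ → H),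
    Coalgebra.comul (R := k) h = ∑ i ∈ s, h1 i ⊗ₜ[k] h2 i →
    Coalgebra.comul (R := k) l = ∑ j ∈ t, l1 j ⊗ₜ[k] l2 j →
    ∑ i ∈ s, ∑ j ∈ t, inv (h1 i) (l1 j) * cocycle (h2 i) (l2 j) =
      ∑ i ∈ s, act (h1 i) 1 * act (h2 i * l) 1
  /-- `h · (l · 1) = Σ (h₁ · 1)(h₂ l · 1)` -/
  act_act_one : ∀ (h l : H) (ι : Type) (s : Finset ι) (h1 h2 : ι → H),
    Coalgebra.comul (R := k) h = ∑ i ∈ s, h1 i ⊗ₜ[k] h2 i →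
    act h (act l 1) = ∑ i ∈ s, act (h1 i) 1 * act (h2 i * l) 1

/-!
The left-hand side splits as `h·((l₁·a)(l₂·1)) = Σ (h₁·(l₁·a))(h₂·(l₂·1))`, and symmetry
rewrites `h₂·(l₂·1)` as `Σ ω(h₂,l₂)ω'(h₃,l₃)`. The twisting axiom, applied to `(h₁, l₁)`
inside the triple coproducts of `h` and `l`, then moves `ω(h₂,l₂)` to the front. Since the
axioms only speak about Sweedler sums for arbitrary representations of `Δ`, the passage
between the representations `(id ⊗ Δ)Δ` and `(Δ ⊗ id)Δ` is made by evaluating one linear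
functional on `(id ⊗ Δ)Δh ⊗ (id ⊗ Δ)Δl` and invoking coassociativity.
-/

section Sweedler

variable {k C A : Type*} [CommSemiring k] [AddCommMonoid C] [Module k C]
  [Semiring A] [Algebra k A]

def tripleConv (F G T : C →ₗ[k] C →ₗ[k] A) :
    (C ⊗[k] (C ⊗[k] C)) ⊗[k] (C ⊗[k] (C ⊗[k] C)) →ₗ[k] A :=
  LinearMap.mul' k A ∘ₗ
    TensorProduct.map (TensorProduct.lift F)
      (LinearMap.mul' k A ∘ₗ TensorProduct.map (TensorProduct.lift G) (TensorProduct.lift T) ∘ₗ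
        (TensorProduct.tensorTensorTensorComm k C C C C).toLinearMap) ∘ₗ
    (TensorProduct.tensorTensorTensorComm k C (C ⊗[k] C) C (C ⊗[k] C)).toLinearMap

@[simp]
theorem tripleConv_tmul (F G T : C →ₗ[k] C →ₗ[k] A) (x y z u v w : C) :
    tripleConv F G T ((x ⊗ₜ[k] (y ⊗ₜ[k] z)) ⊗ₜ[k] (u ⊗ₜ[k] (v ⊗ₜ[k] w))) =
      F x u * G y v * T z w := by
  simp [tripleConv, mul_assoc]

theorem tripleConv_sum_tmul_sum (F G T : C →ₗ[k] C →ₗ[k] A)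
    {ι ι' κ κ' : Type*} (s : Finset ι) (s' : ι → Finset ι') (t : Finset κ)
    (t' : κ → Finset κ') (x y z : ι → ι' → C) (u v w : κ → κ' → C) :
    tripleConv F G T ((∑ i ∈ s, ∑ j ∈ s' i, x i j ⊗ₜ[k] (y i j ⊗ₜ[k] z i j)) ⊗ₜ[k]
        (∑ p ∈ t, ∑ q ∈ t' p, u p q ⊗ₜ[k] (v p q ⊗ₜ[k] w p q))) =
      ∑ i ∈ s, ∑ j ∈ s' i, ∑ p ∈ t, ∑ q ∈ t' p,
        F (x i j) (u p q) * G (y i j) (v p q) * T (z i j) (w p q) := by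
  simp only [sum_tmul, map_sum]
  simp only [tmul_sum, map_sum, tripleConv_tmul]

variable [Coalgebra k C]

def tripleComul (c : C) : C ⊗[k] (C ⊗[k] C) :=
  (Coalgebra.comul (R := k)).lTensor C (Coalgebra.comul (R := k) c)

theorem tripleComul_eq_sum_of_right {c : C} {ι ι' : Type*} {s : Finset ι}
    {s' : ι → Finset ι'} {c1 c2 : ι → C} {c21 c22 : ι → ι' → C}
    (hc : Coalgebra.comul (R := k) c = ∑ i ∈ s, c1 i ⊗ₜ[k] c2 i)
    (hc2 : ∀ i ∈ s, Coalgebra.comul (R := k) (c2 i) = ∑ j ∈ s' i, c21 i j ⊗ₜ[k] c22 i j) :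
    tripleComul (k := k) c = ∑ i ∈ s, ∑ j ∈ s' i, c1 i ⊗ₜ[k] (c21 i j ⊗ₜ[k] c22 i j) := by
  rw [tripleComul, hc, map_sum]
  refine Finset.sum_congr rfl fun i hi => ?_
  rw [LinearMap.lTensor_tmul, hc2 i hi, tmul_sum]

theorem tripleComul_eq_sum_of_left {c : C} {ι ι' : Type*} {s : Finset ι}
    {s' : ι → Finset ι'} {c1 c2 : ι → C} {c11 c12 : ι → ι' → C}
    (hc : Coalgebra.comul (R := k) c = ∑ i ∈ s, c1 i ⊗ₜ[k] c2 i)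
    (hc1 : ∀ i ∈ s, Coalgebra.comul (R := k) (c1 i) = ∑ j ∈ s' i, c11 i j ⊗ₜ[k] c12 i j) :
    tripleComul (k := k) c = ∑ i ∈ s, ∑ j ∈ s' i, c11 i j ⊗ₜ[k] (c12 i j ⊗ₜ[k] c2 i) := by
  rw [tripleComul, ← Coalgebra.coassoc_apply, hc, map_sum, map_sum]
  refine Finset.sum_congr rfl fun i hi => ?_
  rw [LinearMap.rTensor_tmul, hc1 i hi, sum_tmul, map_sum]
  rfl

theorem tripleConv_tripleComul_of_right (F G T : C →ₗ[k] C →ₗ[k] A) {c d : C}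
    {ι ι' κ κ' : Type*} {s : Finset ι} {s' : ι → Finset ι'} {t : Finset κ}
    {t' : κ → Finset κ'} {c1 c2 : ι → C} {c21 c22 : ι → ι' → C}
    {d1 d2 : κ → C} {d21 d22 : κ → κ' → C}
    (hc : Coalgebra.comul (R := k) c = ∑ i ∈ s, c1 i ⊗ₜ[k] c2 i)
    (hc2 : ∀ i ∈ s, Coalgebra.comul (R := k) (c2 i) = ∑ j ∈ s' i, c21 i j ⊗ₜ[k] c22 i j)
    (hd : Coalgebra.comul (R := k) d = ∑ p ∈ t, d1 p ⊗ₜ[k] d2 p)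
    (hd2 : ∀ p ∈ t, Coalgebra.comul (R := k) (d2 p) = ∑ q ∈ t' p, d21 p q ⊗ₜ[k] d22 p q) :
    tripleConv F G T (tripleComul c ⊗ₜ[k] tripleComul d) =
      ∑ i ∈ s, ∑ j ∈ s' i, ∑ p ∈ t, ∑ q ∈ t' p,
        F (c1 i) (d1 p) * G (c21 i j) (d21 p q) * T (c22 i j) (d22 p q) := by
  rw [tripleComul_eq_sum_of_right hc hc2, tripleComul_eq_sum_of_right hd hd2,
    tripleConv_sum_tmul_sum]

theorem tripleConv_tripleComul_of_left (F G T : C →ₗ[k] C →ₗ[k] A) {c d : C}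
    {ι ι' κ κ' : Type*} {s : Finset ι} {s' : ι → Finset ι'} {t : Finset κ}
    {t' : κ → Finset κ'} {c1 c2 : ι → C} {c11 c12 : ι → ι' → C}
    {d1 d2 : κ → C} {d11 d12 : κ → κ' → C}
    (hc : Coalgebra.comul (R := k) c = ∑ i ∈ s, c1 i ⊗ₜ[k] c2 i)
    (hc1 : ∀ i ∈ s, Coalgebra.comul (R := k) (c1 i) = ∑ j ∈ s' i, c11 i j ⊗ₜ[k] c12 i j)
    (hd : Coalgebra.comul (R := k) d = ∑ p ∈ t, d1 p ⊗ₜ[k] d2 p)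
    (hd1 : ∀ p ∈ t, Coalgebra.comul (R := k) (d1 p) = ∑ q ∈ t' p, d11 p q ⊗ₜ[k] d12 p q) :
    tripleConv F G T (tripleComul c ⊗ₜ[k] tripleComul d) =
      ∑ i ∈ s, ∑ p ∈ t,
        (∑ j ∈ s' i, ∑ q ∈ t' p, F (c11 i j) (d11 p q) * G (c12 i j) (d12 p q)) *
          T (c2 i) (d2 p) := by
  rw [tripleComul_eq_sum_of_left hc hc1, tripleComul_eq_sum_of_left hd hd1,
    tripleConv_sum_tmul_sum]
  refine Finset.sum_congr rfl fun i _ => ?_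
  rw [Finset.sum_comm]
  simp only [Finset.sum_mul]

end Sweedler

namespace TwistedPartialAction

variable {k H A : Type} [CommRing k] [Ring H] [HopfAlgebra k H] [Ring A] [Algebra k A]
  (P : TwistedPartialAction k H A)

theorem act_eq_sum_act_mul_act_one (a : A) {l : H} {κ : Type} {t : Finset κ} {l1 l2 : κ → H}
    (hl : Coalgebra.comul (R := k) l = ∑ p ∈ t, l1 p ⊗ₜ[k] l2 p) :
    P.act l a = ∑ p ∈ t, P.act (l1 p) a * P.act (l2 p) 1 := by
  simpa using P.act_mul l a 1 κ t l1 l2 hl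

theorem act_act_eq_sum (a : A) {h l : H} {ι κ : Type} {s : Finset ι} {t : Finset κ}
    {h1 h2 : ι → H} {l1 l2 : κ → H}
    (hh : Coalgebra.comul (R := k) h = ∑ i ∈ s, h1 i ⊗ₜ[k] h2 i)
    (hl : Coalgebra.comul (R := k) l = ∑ p ∈ t, l1 p ⊗ₜ[k] l2 p) :
    P.act h (P.act l a) =
      ∑ i ∈ s, ∑ p ∈ t, P.act (h1 i) (P.act (l1 p) a) * P.act (h2 i) (P.act (l2 p) 1) := by
  rw [P.act_eq_sum_act_mul_act_one a hl, map_sum, Finset.sum_comm]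
  exact Finset.sum_congr rfl fun p _ => P.act_mul h _ _ ι s h1 h2 hh

theorem sum_act_act_mul_cocycle_mul (T : H →ₗ[k] H →ₗ[k] A) (a : A) {h l : H}
    {ι ι' κ κ' : Type} {s : Finset ι} {s' : ι → Finset ι'} {t : Finset κ}
    {t' : κ → Finset κ'} {h1 h2 : ι → H} {h21 h22 : ι → ι' → H}
    {l1 l2 : κ → H} {l21 l22 : κ → κ' → H}
    (hh : Coalgebra.comul (R := k) h = ∑ i ∈ s, h1 i ⊗ₜ[k] h2 i)
    (hh2 : ∀ i ∈ s, Coalgebra.comul (R := k) (h2 i) = ∑ j ∈ s' i, h21 i j ⊗ₜ[k] h22 i j)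
    (hl : Coalgebra.comul (R := k) l = ∑ p ∈ t, l1 p ⊗ₜ[k] l2 p)
    (hl2 : ∀ p ∈ t, Coalgebra.comul (R := k) (l2 p) = ∑ q ∈ t' p, l21 p q ⊗ₜ[k] l22 p q) :
    ∑ i ∈ s, ∑ j ∈ s' i, ∑ p ∈ t, ∑ q ∈ t' p,
        P.act (h1 i) (P.act (l1 p) a) * P.cocycle (h21 i j) (l21 p q) * T (h22 i j) (l22 p q) =
      ∑ i ∈ s, ∑ j ∈ s' i, ∑ p ∈ t, ∑ q ∈ t' p,
        P.cocycle (h1 i) (l1 p) * P.act (h21 i j * l21 p q) a * T (h22 i j) (l22 p q) := by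
  obtain ⟨sh, hsh⟩ := TensorProduct.exists_finset (Coalgebra.comul (R := k) h)
  obtain ⟨sl, hsl⟩ := TensorProduct.exists_finset (Coalgebra.comul (R := k) l)
  choose u hu using fun x : H => TensorProduct.exists_finset (Coalgebra.comul (R := k) x)
  have lhs := tripleConv_tripleComul_of_right (P.act.compl₂ (P.act.flip a)) P.cocycle T
    hh hh2 hl hl2
  have rhs := tripleConv_tripleComul_of_right P.cocycle
    ((LinearMap.mul k H).compr₂ (P.act.flip a)) T hh hh2 hl hl2
  simp only [LinearMap.compl₂_apply, LinearMap.compr₂_apply, LinearMap.flip_apply,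
    LinearMap.mul_apply'] at lhs rhs
  rw [← lhs, ← rhs, tripleConv_tripleComul_of_left _ _ _ hsh (fun x _ => hu x.1) hsl
    (fun y _ => hu y.1), tripleConv_tripleComul_of_left _ _ _ hsh (fun x _ => hu x.1) hsl
    (fun y _ => hu y.1)]
  refine Finset.sum_congr rfl fun x _ => Finset.sum_congr rfl fun y _ => ?_
  simp only [LinearMap.compl₂_apply, LinearMap.compr₂_apply, LinearMap.flip_apply,
    LinearMap.mul_apply']
  rw [P.twisted x.1 y.1 a _ _ _ _ _ _ _ _ (hu x.1) (hu y.1)]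

end TwistedPartialAction

theorem SymmetricTwistedPartialAction.act_act_one_eq_sum_cocycle_mul_inv
    {k H A : Type} [CommRing k] [Ring H] [HopfAlgebra k H] [Ring A] [Algebra k A]
    (P : SymmetricTwistedPartialAction k H A) {h l : H} {ι κ : Type} {s : Finset ι}
    {t : Finset κ} {h1 h2 : ι → H} {l1 l2 : κ → H}
    (hh : Coalgebra.comul (R := k) h = ∑ i ∈ s, h1 i ⊗ₜ[k] h2 i)
    (hl : Coalgebra.comul (R := k) l = ∑ p ∈ t, l1 p ⊗ₜ[k] l2 p) :
    P.act h (P.act l 1) = ∑ i ∈ s, ∑ p ∈ t, P.cocycle (h1 i) (l1 p) * P.inv (h2 i) (l2 p) := by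
  rw [P.cocycle_inv h l ι κ s t h1 h2 l1 l2 hh hl, P.act_act_one h l ι s h1 h2 hh]

theorem symm_act_act
    {k H A : Type} [CommRing k] [Ring H] [HopfAlgebra k H]
    [Ring A] [Algebra k A] (P : SymmetricTwistedPartialAction k H A) :
    ∀ (h l : H) (a : A) (ι ι' κ κ' : Type) (s : Finset ι)
      (s' : ι → Finset ι') (t : Finset κ) (t' : κ → Finset κ')
      (h1 h2 : ι → H) (h21 h22 : ι → ι' → H)
      (l1 l2 : κ → H) (l21 l22 : κ → κ' → H),
      Coalgebra.comul (R := k) h = ∑ i ∈ s, h1 i ⊗ₜ[k] h2 i →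
      (∀ i ∈ s, Coalgebra.comul (R := k) (h2 i) =
        ∑ j ∈ s' i, h21 i j ⊗ₜ[k] h22 i j) →
      Coalgebra.comul (R := k) l = ∑ p ∈ t, l1 p ⊗ₜ[k] l2 p →
      (∀ p ∈ t, Coalgebra.comul (R := k) (l2 p) =
        ∑ q ∈ t' p, l21 p q ⊗ₜ[k] l22 p q) →
      P.act h (P.act l a) =
        ∑ i ∈ s, ∑ j ∈ s' i, ∑ p ∈ t, ∑ q ∈ t' p,
          P.cocycle (h1 i) (l1 p) * P.act (h21 i j * l21 p q) a *
            P.inv (h22 i j) (l22 p q) := by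
  intro h l a ι ι' κ κ' s s' t t' h1 h2 h21 h22 l1 l2 l21 l22 hh hh2 hl hl2
  rw [← P.sum_act_act_mul_cocycle_mul P.inv a hh hh2 hl hl2, P.act_act_eq_sum a hh hl]
  refine Finset.sum_congr rfl fun i hi => ?_
  rw [Finset.sum_comm]
  refine Finset.sum_congr rfl fun p hp => ?_
  rw [P.act_act_one_eq_sum_cocycle_mul_inv (hh2 i hi) (hl2 p hp)]
  simp only [Finset.mul_sum, mul_assoc]
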